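/- arXiv:1711.08048 — 4 statements merged into one kernel-verified Lean document; each statement's English description precedes it below -/
import Mathlib

section
/- Let D be a dimension structure with S a dense, complete linear order. Then for each x ∈ X, sup{s ∈ S : μ_s(x) = +∞} = inf{s ∈ S : μ_s(x) = 0}. -/
theorem stmt5 {X S : Type*} [CompleteLinearOrder S] [DenselyOrdered S] (μ : S → X → ENNReal)
    (ax1 : ∀ (x : X) (s p : S), s < p → μ s x ≠ ⊤ → μ p x = 0) :
    ∀ x : X, sSup {s | μ s x = ⊤} = sInf {s | μ s x = 0} := by
  intro x
  apply le_antisymm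
  · apply sSup_le
    intro a ha
    apply le_sInf
    intro b hb
    by_contra h
    push_neg at h
    have := ax1 x b a h (by simp [Set.mem_setOf_eq.mp hb])
    simp [Set.mem_setOf_eq, this] at ha
  · by_contra h
    push_neg at h
    obtain ⟨t, ht1, ht2⟩ := exists_between h
    have htA : μ t x ≠ ⊤ := fun hc => absurd (le_sSup (show t ∈ {s | μ s x = ⊤} from hc)) (not_le.mpr ht1)
    obtain ⟨p, hp1, hp2⟩ := exists_between ht2
    have : μ p x = 0 := ax1 x t p hp1 htA
    exact absurd (sInf_le (show p ∈ {s | μ s x = 0} from this)) (not_le.mpr hp2)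
end

section
/- Let D be a dimension structure with S linearly ordered, and equip X with a partial order. Then the condition 'x ≤ y implies μ_D(x) ≤ μ_D(y) in the lexicographic order on S̄ × [0,+∞]' is equivalent to the condition 'x ≤ y implies μ_s(x) ≤ μ_s(y) for all s ∈ S'. -/
/-- The extension of `μ` to `S̄ = WithBot (WithTop S)`, with the conventions
`μ₋∞(x) = +∞` and `μ₊∞(x) = 0`. -/
noncomputable def muBar {X S : Type*} (μ : S → X → ENNReal)
    (d : WithBot (WithTop S)) (x : X) : ENNReal :=
  WithBot.recBotCoe ⊤ (fun t => WithTop.recTopCoe 0 (fun s => μ s x) t) d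

/-! By (ax1), `μ_s x = +∞` for `s < dim x` and `μ_s x = 0` for `s > dim x`, so the whole family
`s ↦ μ_s x` is determined by `μ_D(x)`. Pointwise monotonicity forces `dim x ≤ dim y` (finiteness of
`μ_s y` implies that of `μ_s x`), and at `s = dim x` it is exactly the second lexicographic
coordinate; conversely, for every other `s` the comparison is decided by the first coordinate. -/

namespace DimensionStructure

variable {X S : Type*} [LinearOrder S] {μ : S → X → ENNReal} {x y : X}
  {d e : WithBot (WithTop S)}

-- `dim x = inf (finiteLevels μ x)` in `S̄`.
def finiteLevels (μ : S → X → ENNReal) (x : X) : Set (WithBot (WithTop S)) :=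
  (fun s : S => ((s : WithTop S) : WithBot (WithTop S))) '' {s | μ s x ≠ ⊤}

omit [LinearOrder S] in
theorem muBar_mono (h : ∀ s, μ s x ≤ μ s y) :
    ∀ d : WithBot (WithTop S), muBar μ d x ≤ muBar μ d y
  | ⊥ => le_rfl
  | (⊤ : WithTop S) => le_rfl
  | ((s : S) : WithTop S) => h s

theorem mu_eq_top_of_lt_of_isGLB (hd : IsGLB (finiteLevels μ x) d) {s : S}
    (hs : ((s : WithTop S) : WithBot (WithTop S)) < d) : μ s x = ⊤ := by
  by_contra hfin
  exact hs.not_ge (hd.1 ⟨s, hfin, rfl⟩)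

theorem mu_eq_zero_of_isGLB_lt (ax1 : ∀ s p : S, s < p → μ s x ≠ ⊤ → μ p x = 0)
    (hd : IsGLB (finiteLevels μ x) d) {s : S}
    (hs : d < ((s : WithTop S) : WithBot (WithTop S))) : μ s x = 0 := by
  obtain ⟨_, ⟨t, hfin, rfl⟩, hts⟩ := (isGLB_lt_iff hd).1 hs
  exact ax1 t s (by simpa using hts) hfin

theorem le_of_isGLB_of_mu_le (hd : IsGLB (finiteLevels μ x) d) (he : IsGLB (finiteLevels μ y) e)
    (h : ∀ s, μ s x ≤ μ s y) : d ≤ e :=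
  he.mono hd <| Set.image_mono fun s hy hx => hy (top_le_iff.1 (hx ▸ h s))

theorem mu_le_of_toLex_le (ax1 : ∀ s p : S, s < p → μ s x ≠ ⊤ → μ p x = 0)
    (hd : IsGLB (finiteLevels μ x) d) (he : IsGLB (finiteLevels μ y) e)
    (h : (toLex (d, muBar μ d x) : WithBot (WithTop S) ×ₗ ENNReal) ≤ toLex (e, muBar μ e y))
    (s : S) : μ s x ≤ μ s y := by
  obtain ⟨hde, hbar⟩ := Prod.Lex.toLex_le_toLex'.1 h
  rcases lt_trichotomy ((s : WithTop S) : WithBot (WithTop S)) d with hs | rfl | hs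
  · rw [mu_eq_top_of_lt_of_isGLB hd hs, mu_eq_top_of_lt_of_isGLB he (hs.trans_le hde)]
  · rcases hde.eq_or_lt with rfl | hlt
    · exact hbar rfl
    · rw [mu_eq_top_of_lt_of_isGLB he hlt]
      exact le_top
  · rw [mu_eq_zero_of_isGLB_lt ax1 hd hs]
    exact zero_le

theorem toLex_le_of_mu_le (hd : IsGLB (finiteLevels μ x) d) (he : IsGLB (finiteLevels μ y) e)
    (h : ∀ s, μ s x ≤ μ s y) :
    (toLex (d, muBar μ d x) : WithBot (WithTop S) ×ₗ ENNReal) ≤ toLex (e, muBar μ e y) :=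
  Prod.Lex.toLex_le_toLex'.2
    ⟨le_of_isGLB_of_mu_le hd he h, fun (hde : d = e) => hde ▸ muBar_mono h d⟩

end DimensionStructure

open DimensionStructure in
theorem stmt8 {X S : Type*} [LinearOrder S] [PartialOrder X] (μ : S → X → ENNReal)
    (ax1 : ∀ (x : X) (s p : S), s < p → μ s x ≠ ⊤ → μ p x = 0)
    (dimx : X → WithBot (WithTop S))
    (hdim : ∀ x : X,
      IsGLB ((fun s : S => ((s : WithTop S) : WithBot (WithTop S))) '' {s | μ s x ≠ ⊤}) (dimx x)) :
    (∀ x y : X, x ≤ y →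
        (toLex (dimx x, muBar μ (dimx x) x) : (WithBot (WithTop S)) ×ₗ ENNReal)
          ≤ toLex (dimx y, muBar μ (dimx y) y)) ↔
    (∀ x y : X, x ≤ y → ∀ s : S, μ s x ≤ μ s y) :=
  ⟨fun H x y hxy => mu_le_of_toLex_le (ax1 x) (hdim x) (hdim y) (H x y hxy),
    fun H x y hxy => toLex_le_of_mu_le (hdim x) (hdim y) (H x y hxy)⟩
end

section
/- For H ∈ L (Lebesgue measurable subsets of ℝ) and n ∈ ℤ define μ_n(H) = +∞ if λ(H ∩ [n+1,∞)) > 0 and μ_n(H) = λ(H ∩ [n,n+1)) otherwise. Then ⟨L, μ_n : n ∈ ℤ⟩ is a dimension structure. -/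
open MeasureTheory Set

open Classical in
/-- `μ_n(H) = +∞` if `λ(H ∩ [n+1,∞)) > 0`, else `λ(H ∩ [n,n+1))`. -/
noncomputable def muLeb (n : ℤ) (H : Set ℝ) : ENNReal :=
  if 0 < volume (H ∩ Ici ((n : ℝ) + 1)) then ⊤ else volume (H ∩ Ico (n : ℝ) ((n : ℝ) + 1))

theorem volume_inter_Ici_eq_zero_of_muLeb_ne_top {n : ℤ} {H : Set ℝ} (h : muLeb n H ≠ ⊤) :
    volume (H ∩ Ici ((n : ℝ) + 1)) = 0 := by
  by_contra hpos
  exact h (if_pos (pos_iff_ne_zero.2 hpos))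

theorem muLeb_eq_zero_of_volume_inter_Ici {n : ℤ} {H : Set ℝ}
    (h : volume (H ∩ Ici (n : ℝ)) = 0) : muLeb n H = 0 := by
  have htail : volume (H ∩ Ici ((n : ℝ) + 1)) = 0 :=
    measure_mono_null (inter_subset_inter_right _ (Ici_subset_Ici.2 (by linarith))) h
  rw [muLeb, if_neg (by simp [htail])]
  exact measure_mono_null (inter_subset_inter_right _ Ico_subset_Ici_self) h

theorem muLeb_eq_zero_of_lt {m n : ℤ} {H : Set ℝ} (hmn : m < n) (hm : muLeb m H ≠ ⊤) :
    muLeb n H = 0 := by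
  have hle : (m : ℝ) + 1 ≤ n := by exact_mod_cast hmn
  exact muLeb_eq_zero_of_volume_inter_Ici <| measure_mono_null
    (inter_subset_inter_right _ (Ici_subset_Ici.2 hle))
    (volume_inter_Ici_eq_zero_of_muLeb_ne_top hm)

theorem stmt13 :
    (∀ H : Set ℝ, MeasurableSet H → ∀ m n : ℤ, m < n → muLeb m H ≠ ⊤ → muLeb n H = 0) ∧
    (∀ H : Set ℝ, MeasurableSet H → ∀ m n : ℤ, 0 < muLeb m H → muLeb m H ≠ ⊤ →
      muLeb n H ≠ ⊤ → m ≤ n ∨ n ≤ m) ∧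
    (∀ H : Set ℝ, MeasurableSet H → ∃ d : WithBot (WithTop ℤ),
      IsGLB ((fun n : ℤ => ((n : WithTop ℤ) : WithBot (WithTop ℤ))) '' {n | muLeb n H = 0}) d) :=
  ⟨fun _ _ _ _ hmn hm => muLeb_eq_zero_of_lt hmn hm,
    fun _ _ m n _ _ _ => le_total m n,
    fun _ _ => ⟨_, isGLB_sInf _⟩⟩
end

section
/- For H ∈ L (Lebesgue measurable subsets of ℝ²) and (n,m) ∈ ℤ², let H_{n,m} = H ∩ [n,n+1)×[m,m+1) and Ĥ_{n,m} = H ∩ {(x,y) : x ≥ n+1 or y ≥ m+1}, and define μ_{n,m}(H) = +∞ if λ(Ĥ_{n,m}) > 0, and λ(H_{n,m}) otherwise. Then ⟨L, μ_{n,m} : (n,m) ∈ ℤ² with the product order⟩ is a principal dimension structure. -/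
open MeasureTheory Set

open Classical in
/-- `μ_{n,m}(H) = +∞` if `λ(Ĥ_{n,m}) > 0`, else `λ(H_{n,m})`, where
`H_{n,m} = H ∩ [n,n+1)×[m,m+1)` and `Ĥ_{n,m} = H ∩ {(x,y) : x ≥ n+1 or y ≥ m+1}`. -/
noncomputable def muPlaneLeb (q : ℤ × ℤ) (H : Set (ℝ × ℝ)) : ENNReal :=
  if 0 < volume (H ∩ {p : ℝ × ℝ | (q.1 : ℝ) + 1 ≤ p.1 ∨ (q.2 : ℝ) + 1 ≤ p.2}) then ⊤
  else volume (H ∩ (Ico (q.1 : ℝ) ((q.1 : ℝ) + 1) ×ˢ Ico (q.2 : ℝ) ((q.2 : ℝ) + 1)))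


section Aux

def Sq (q : ℤ × ℤ) : Set (ℝ × ℝ) := {p : ℝ × ℝ | (q.1 : ℝ) + 1 ≤ p.1 ∨ (q.2 : ℝ) + 1 ≤ p.2}

def Bq (q : ℤ × ℤ) : Set (ℝ × ℝ) := Ico (q.1 : ℝ) ((q.1 : ℝ) + 1) ×ˢ Ico (q.2 : ℝ) ((q.2 : ℝ) + 1)

lemma box_ne_top (q : ℤ × ℤ) (H : Set (ℝ × ℝ)) : volume (H ∩ Bq q) ≠ ⊤ := by
  apply ne_top_of_le_ne_top ?_ (measure_mono inter_subset_right)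
  rw [Bq, Measure.volume_eq_prod, Measure.prod_prod, Real.volume_Ico, Real.volume_Ico]
  simp

lemma mu_ne_top_iff (q : ℤ × ℤ) (H : Set (ℝ × ℝ)) :
    muPlaneLeb q H ≠ ⊤ ↔ volume (H ∩ Sq q) = 0 := by
  rw [muPlaneLeb]
  split_ifs with h
  · simp [Sq, h.ne']
  · exact iff_of_true (box_ne_top q H) (nonpos_iff_eq_zero.mp (not_lt.mp h))

lemma mu_val (q : ℤ × ℤ) (H : Set (ℝ × ℝ)) (h : volume (H ∩ Sq q) = 0) :
    muPlaneLeb q H = volume (H ∩ Bq q) := by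
  rw [muPlaneLeb, if_neg]
  · rfl
  · simp [show (H ∩ {p : ℝ × ℝ | (q.1 : ℝ) + 1 ≤ p.1 ∨ (q.2 : ℝ) + 1 ≤ p.2}) = H ∩ Sq q from rfl, h]

lemma Sq_mono {q q' : ℤ × ℤ} (h : q ≤ q') : Sq q' ⊆ Sq q := by
  rintro p (hp | hp)
  · left
    refine le_trans ?_ hp
    have : (q.1 : ℝ) ≤ (q'.1 : ℝ) := by exact_mod_cast h.1
    linarith
  · right
    refine le_trans ?_ hp
    have : (q.2 : ℝ) ≤ (q'.2 : ℝ) := by exact_mod_cast h.2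
    linarith

lemma Bq_subset_Sq {q q' : ℤ × ℤ} (h : ¬ q' ≤ q) : Bq q' ⊆ Sq q := by
  rw [Prod.le_def, not_and_or] at h
  rcases h with h | h
  · intro p hp
    left
    have : (q.1 : ℝ) + 1 ≤ (q'.1 : ℝ) := by exact_mod_cast Int.add_one_le_iff.mpr (not_le.mp h)
    exact this.trans hp.1.1
  · intro p hp
    right
    have : (q.2 : ℝ) + 1 ≤ (q'.2 : ℝ) := by exact_mod_cast Int.add_one_le_iff.mpr (not_le.mp h)
    exact this.trans hp.2.1

/-- ax1 -/
lemma ax1 (H : Set (ℝ × ℝ)) (q q' : ℤ × ℤ) (hlt : q < q')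
    (hne : muPlaneLeb q H ≠ ⊤) : muPlaneLeb q' H = 0 := by
  rw [mu_ne_top_iff] at hne
  have hS' : volume (H ∩ Sq q') = 0 :=
    measure_mono_null (inter_subset_inter_right _ (Sq_mono hlt.le)) hne
  rw [mu_val q' H hS']
  exact measure_mono_null (inter_subset_inter_right _ (Bq_subset_Sq hlt.not_ge)) hne

end Aux

theorem stmt14 :
    (∀ H : Set (ℝ × ℝ), MeasurableSet H → ∀ q q' : ℤ × ℤ, q < q' →
      muPlaneLeb q H ≠ ⊤ → muPlaneLeb q' H = 0) ∧
    (∀ H : Set (ℝ × ℝ), MeasurableSet H → ∀ q q' : ℤ × ℤ, 0 < muPlaneLeb q H →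
      muPlaneLeb q H ≠ ⊤ → muPlaneLeb q' H ≠ ⊤ → q ≤ q' ∨ q' ≤ q) ∧
    (∀ H : Set (ℝ × ℝ), MeasurableSet H →
      ∃ d : WithBot (WithTop ℤ) × WithBot (WithTop ℤ),
        IsGLB ((fun q : ℤ × ℤ => (((q.1 : WithTop ℤ) : WithBot (WithTop ℤ)),
          ((q.2 : WithTop ℤ) : WithBot (WithTop ℤ)))) '' {q | muPlaneLeb q H = 0}) d) ∧
    (∀ H : Set (ℝ × ℝ), MeasurableSet H → ∀ q q' : ℤ × ℤ,
      IsGLB {r : ℤ × ℤ | muPlaneLeb r H ≠ ⊤} q → q < q' → muPlaneLeb q' H = 0) := by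
  refine ⟨fun H _ q q' hlt hne => ax1 H q q' hlt hne, ?_, ?_, ?_⟩
  · -- ax2
    intro H _ q q' hpos hne hne'
    left
    by_contra hc
    rw [mu_ne_top_iff] at hne hne'
    have hb : volume (H ∩ Bq q) = 0 := by
      refine measure_mono_null (inter_subset_inter_right _ (Bq_subset_Sq ?_)) hne'
      intro h; exact hc h  -- hc : ¬ q ≤ q', need ¬ q ≤ q' for Bq_subset_Sq with q:=q', q':=q
    rw [mu_val q H hne, hb] at hpos
    exact lt_irrefl _ hpos
  · -- ax3
    intro H _
    exact ⟨_, isGLB_sInf _⟩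
  · -- principal
    intro H hm q q' hglb hlt
    -- show q itself satisfies muPlaneLeb q H ≠ ⊤, then apply ax1
    have hT : volume (H ∩ Sq q) = 0 := by
      set T : Set (ℤ × ℤ) := {r : ℤ × ℤ | muPlaneLeb r H ≠ ⊤} with hTdef
      have hne : T.Nonempty := by
        by_contra hc
        rw [Set.not_nonempty_iff_eq_empty] at hc
        have h1 : (q.1 + 1, q.2) ∈ lowerBounds T := by simp [hc, lowerBounds]
        have := hglb.2 h1
        have := this.1
        omega
      -- minimal first coordinate
      obtain ⟨r, hrT⟩ := hne
      have hbd1 : ∀ z ∈ Prod.fst '' T, q.1 ≤ z := by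
        rintro z ⟨u, huT, rfl⟩; exact (hglb.1 huT).1
      have hbd2 : ∀ z ∈ Prod.snd '' T, q.2 ≤ z := by
        rintro z ⟨u, huT, rfl⟩; exact (hglb.1 huT).2
      obtain ⟨a, ⟨u, huT, hu1⟩, ha⟩ := Int.exists_least_of_bdd
        (P := fun z => z ∈ Prod.fst '' T) ⟨q.1, fun z hz => hbd1 z hz⟩ ⟨r.1, r, hrT, rfl⟩
      obtain ⟨b, ⟨v, hvT, hv1⟩, hb⟩ := Int.exists_least_of_bdd
        (P := fun z => z ∈ Prod.snd '' T) ⟨q.2, fun z hz => hbd2 z hz⟩ ⟨r.2, r, hrT, rfl⟩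
      -- t = (a, b) = u ⊓ v is in T and is a lower bound, so q = t
      have htT : (a, b) ∈ T := by
        rw [hTdef, Set.mem_setOf_eq, mu_ne_top_iff]
        have hsub : Sq (a, b) ⊆ Sq u ∪ Sq v := by
          rintro p (hp | hp)
          · left; left; rw [hu1]; exact hp
          · right; right; rw [hv1]; exact hp
        have : H ∩ Sq (a, b) ⊆ (H ∩ Sq u) ∪ (H ∩ Sq v) := by
          rintro p ⟨hH, hS⟩
          rcases hsub hS with h | h
          · exact Or.inl ⟨hH, h⟩
          · exact Or.inr ⟨hH, h⟩
        refine measure_mono_null this (measure_union_null ?_ ?_)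
        · exact (mu_ne_top_iff u H).mp huT
        · exact (mu_ne_top_iff v H).mp hvT
      have hlb : (a, b) ∈ lowerBounds T := by
        rintro w hwT
        exact ⟨ha w.1 ⟨w, hwT, rfl⟩, hb w.2 ⟨w, hwT, rfl⟩⟩
      have hq : q = (a, b) := le_antisymm (hglb.1 htT) (hglb.2 hlb)
      rw [hq]
      exact (mu_ne_top_iff (a, b) H).mp htT
    exact ax1 H q q' hlt ((mu_ne_top_iff q H).mpr hT)
end
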